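/- (Bounded distance to optimal solution for DGDᵗ) Suppose α ≤ min{(1 + λ_n(Wᵗ))/L, c₄} and x_0 = 0. Then for every δ > 0 and every k ≥ 0, ‖x̄_{k+1} − x*‖² ≤ c₁² ‖x̄_k − x*‖² + c₃²/(1 − βᵗ)², where c₁² = 1 − αc₂ + αδ − α²δc₂, c₂ = 2μ_f̄ L_f̄/(μ_f̄ + L_f̄), c₃² = α³(α + δ⁻¹)L²D², and D = √(2L Σ_i (f_i(0) − f_i*)). -/

import Mathlib

open Finset Filter

noncomputable section

/-- A block `ℝ^p` with the Euclidean norm. -/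
abbrev Vec (p : ℕ) := EuclideanSpace ℝ (Fin p)

/-- The concatenated space `ℝ^{np}` (n blocks of size p) with the Euclidean norm. -/
abbrev CVec (n p : ℕ) := PiLp 2 (fun _ : Fin n => Vec p)

/-- Action of the Kronecker product `W ⊗ I_p` on a concatenated vector of `ℝ^{np}`. -/
def kron {n p : ℕ} (W : Matrix (Fin n) (Fin n) ℝ) (x : CVec n p) : CVec n p :=
  WithLp.toLp 2 (fun i => ∑ j, W i j • x j)

/-- Concatenated gradient `∇f(x) = (∇f₁(x₁); …; ∇fₙ(xₙ))`. -/
def gradConcat {n p : ℕ} (f : Fin n → Vec p → ℝ) (x : CVec n p) : CVec n p :=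
  WithLp.toLp 2 (fun i => gradient (f i) (x i))

/-!
DGDᵗ is gradient descent with step `α` on the penalized objective
`F(x) + (2α)⁻¹ ⟪x, (I - Wᵗ ⊗ Iₚ) x⟫`, where `F(x) = ∑ᵢ fᵢ(xᵢ)`. This function is
`(L + (1 - λₙ(Wᵗ))/α)`-smooth, so the stepsize condition `αL ≤ 1 + λₙ(Wᵗ)` makes it decrease
along the iterates; as `Wᵗ ≼ I` it dominates `F`, whence `F(xₖ) ≤ F(0)` and
`‖∇F(xₖ)‖² ≤ 2L (F(xₖ) - F*) ≤ D²`. Off the consensus direction `Wᵗ` contracts by `βᵗ`, so the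
consensus error `eₖ = ‖xₖ - 1 ⊗ x̄ₖ‖` obeys `eₖ₊₁ ≤ βᵗ eₖ + αD`, i.e. `eₖ ≤ αD/(1 - βᵗ)`.
Finally `x̄ₖ` performs a gradient step on `f̄` perturbed by at most `L eₖ`: the exact step
contracts by `1 - α c₂` (coercivity of strongly convex smooth functions), and Young's
inequality with parameter `δ` absorbs the perturbation.
-/

local notation "⟪" x ", " y "⟫" => @inner ℝ _ _ x y

section QuadraticUpperBound

variable {E : Type*} [NormedAddCommGroup E] [InnerProductSpace ℝ E]

def HasQuadraticUpperBound (f : E → ℝ) (g : E → E) (K : ℝ) : Prop :=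
  ∀ x y, f y ≤ f x + ⟪g x, y - x⟫ + K / 2 * ‖y - x‖ ^ 2

namespace HasQuadraticUpperBound

variable {f : E → ℝ} {g : E → E} {K : ℝ}

theorem le_sub_smul (h : HasQuadraticUpperBound f g K) (x : E) (α : ℝ) :
    f (x - α • g x) ≤ f x - α * (1 - K * α / 2) * ‖g x‖ ^ 2 := by
  have := h x (x - α • g x)
  rw [sub_sub_cancel_left, inner_neg_right, real_inner_smul_right, real_inner_self_eq_norm_sq,
    norm_neg, norm_smul, mul_pow, Real.norm_eq_abs, sq_abs] at this
  linarith

theorem sq_norm_le (h : HasQuadraticUpperBound f g K) (hK : 0 < K) {x₀ : E}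
    (hmin : ∀ z, f x₀ ≤ f z) (y : E) : ‖g y‖ ^ 2 ≤ 2 * K * (f y - f x₀) := by
  have := (hmin _).trans (h.le_sub_smul y K⁻¹)
  calc ‖g y‖ ^ 2 = 2 * K * (K⁻¹ * (1 - K * K⁻¹ / 2) * ‖g y‖ ^ 2) := by field_simp; ring
    _ ≤ 2 * K * (f y - f x₀) := by gcongr; linarith

theorem sub_inner (h : HasQuadraticUpperBound f g K) (c : E) :
    HasQuadraticUpperBound (fun z => f z - ⟪c, z⟫) (fun z => g z - c) K := by
  intro x y
  have := h x y
  simp only [inner_sub_left, inner_sub_right] at *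
  linarith

theorem sub_half_mul_sq_norm (h : HasQuadraticUpperBound f g K) (μ : ℝ) :
    HasQuadraticUpperBound (fun z => f z - μ / 2 * ‖z‖ ^ 2) (fun z => g z - μ • z) (K - μ) := by
  intro x y
  have := h x y
  dsimp only
  rw [sub_div, sub_mul, norm_sub_sq_real y x] at *
  simp only [inner_sub_left, inner_sub_right, real_inner_smul_left, real_inner_self_eq_norm_sq,
    real_inner_comm x y] at *
  linarith

end HasQuadraticUpperBound

def penalizedObjective (F : E → ℝ) (Z : E →ₗ[ℝ] E) (α : ℝ) (x : E) : ℝ :=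
  F x + (2 * α)⁻¹ * (‖x‖ ^ 2 - ⟪x, Z x⟫)

variable {F : E → ℝ} {G : E → E} {Z : E →ₗ[ℝ] E} {L lam α : ℝ}

theorem HasQuadraticUpperBound.penalize (hF : HasQuadraticUpperBound F G L)
    (hZ : Z.IsSymmetric) (hlam : ∀ v, lam * ‖v‖ ^ 2 ≤ ⟪v, Z v⟫) (hα : 0 < α) :
    HasQuadraticUpperBound (penalizedObjective F Z α) (fun x => G x + α⁻¹ • (x - Z x))
      (L + (1 - lam) / α) := by
  intro x y
  have hpen : ‖y‖ ^ 2 - ⟪y, Z y⟫ = ‖x‖ ^ 2 - ⟪x, Z x⟫ + 2 * ⟪x - Z x, y - x⟫ +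
      (‖y - x‖ ^ 2 - ⟪y - x, Z (y - x)⟫) := by
    have hsymm := hZ x (y - x)
    rw [← real_inner_self_eq_norm_sq, ← real_inner_self_eq_norm_sq, ← real_inner_self_eq_norm_sq]
    simp only [map_sub, inner_sub_left, inner_sub_right, real_inner_comm x y] at *
    linarith [real_inner_comm y (Z x), real_inner_comm x (Z x)]
  have hquad : (2 * α)⁻¹ * (‖y - x‖ ^ 2 - ⟪y - x, Z (y - x)⟫) ≤
      (1 - lam) / α / 2 * ‖y - x‖ ^ 2 := by
    rw [mul_comm, ← div_eq_mul_inv, div_le_iff₀ (by positivity)]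
    have := hlam (y - x)
    field_simp
    nlinarith
  have := hF x y
  simp only [penalizedObjective, inner_add_left, real_inner_smul_left, hpen] at *
  field_simp at hquad ⊢
  nlinarith

theorem HasQuadraticUpperBound.penalizedObjective_le (hF : HasQuadraticUpperBound F G L)
    (hZ : Z.IsSymmetric) (hlam : ∀ v, lam * ‖v‖ ^ 2 ≤ ⟪v, Z v⟫) (hα : 0 < α)
    (hαL : α * L ≤ 1 + lam) (x : E) :
    penalizedObjective F Z α (Z x - α • G x) ≤ penalizedObjective F Z α x := by
  have hstep : Z x - α • G x = x - α • (G x + α⁻¹ • (x - Z x)) := by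
    rw [smul_add, smul_smul, mul_inv_cancel₀ hα.ne', one_smul]
    abel
  have hdec := (hF.penalize hZ hlam hα).le_sub_smul x α
  have hcoef : 0 ≤ α * (1 - (L + (1 - lam) / α) * α / 2) := by
    have : (L + (1 - lam) / α) * α = α * L + (1 - lam) := by field_simp
    rw [this]
    nlinarith
  rw [hstep]
  nlinarith [sq_nonneg ‖G x + α⁻¹ • (x - Z x)‖]

theorem HasQuadraticUpperBound.le_penalizedObjective_of_iterate
    (hF : HasQuadraticUpperBound F G L) (hZ : Z.IsSymmetric)
    (hlam : ∀ v, lam * ‖v‖ ^ 2 ≤ ⟪v, Z v⟫) (hZ₁ : ∀ v, ⟪v, Z v⟫ ≤ ‖v‖ ^ 2) (hα : 0 < α)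
    (hαL : α * L ≤ 1 + lam) {x : ℕ → E} (hx : ∀ k, x (k + 1) = Z (x k) - α • G (x k))
    (k : ℕ) : F (x k) ≤ penalizedObjective F Z α (x 0) := by
  have hanti : Antitone fun k => penalizedObjective F Z α (x k) :=
    antitone_nat_of_succ_le fun k => by
      simpa only [hx k] using hF.penalizedObjective_le hZ hlam hα hαL (x k)
  calc F (x k) ≤ penalizedObjective F Z α (x k) :=
        le_add_of_nonneg_right (mul_nonneg (by positivity) (sub_nonneg.2 (hZ₁ _)))
    _ ≤ penalizedObjective F Z α (x 0) := hanti (Nat.zero_le k)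

theorem HasQuadraticUpperBound.sq_norm_iterate_le (hF : HasQuadraticUpperBound F G L)
    (hL : 0 < L) (hZ : Z.IsSymmetric) (hlam : ∀ v, lam * ‖v‖ ^ 2 ≤ ⟪v, Z v⟫)
    (hZ₁ : ∀ v, ⟪v, Z v⟫ ≤ ‖v‖ ^ 2) (hα : 0 < α) (hαL : α * L ≤ 1 + lam) {x : ℕ → E}
    (hx : ∀ k, x (k + 1) = Z (x k) - α • G (x k)) {x₀ : E} (hmin : ∀ z, F x₀ ≤ F z)
    (k : ℕ) : ‖G (x k)‖ ^ 2 ≤ 2 * L * (penalizedObjective F Z α (x 0) - F x₀) :=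
  (hF.sq_norm_le hL hmin (x k)).trans <| by
    gcongr
    exact hF.le_penalizedObjective_of_iterate hZ hlam hZ₁ hα hαL hx k

theorem norm_sub_smul_sq_le (v e : E) (hα : 0 ≤ α) {δ : ℝ} (hδ : 0 < δ) :
    ‖v - α • e‖ ^ 2 ≤ (1 + α * δ) * ‖v‖ ^ 2 + (α ^ 2 + α * δ⁻¹) * ‖e‖ ^ 2 := by
  have hyoung : -(2 * ⟪v, e⟫) ≤ δ * ‖v‖ ^ 2 + δ⁻¹ * ‖e‖ ^ 2 := by
    have hcs := neg_le_of_abs_le (abs_real_inner_le_norm v e)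
    have := sq_nonneg (δ * ‖v‖ - ‖e‖)
    have hinv : δ * δ⁻¹ = 1 := mul_inv_cancel₀ hδ.ne'
    nlinarith [inv_pos.2 hδ]
  rw [norm_sub_sq_real, real_inner_smul_right, norm_smul, mul_pow, Real.norm_eq_abs, sq_abs]
  nlinarith [mul_le_mul_of_nonneg_left hyoung hα]

end QuadraticUpperBound

section Gradient

variable {E : Type*} [NormedAddCommGroup E] [InnerProductSpace ℝ E] [CompleteSpace E]
  {f : E → ℝ} {g : E → E}

theorem HasGradientAt.hasDerivAt_comp_lineMap {g : E} {x y : E} {r : ℝ}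
    (hf : HasGradientAt f g (AffineMap.lineMap x y r)) :
    HasDerivAt (f ∘ AffineMap.lineMap x y) ⟪g, y - x⟫ r := by
  simpa using (hasGradientAt_iff_hasFDerivAt.1 hf).comp_hasDerivAt r
    AffineMap.hasDerivAt_lineMap

theorem HasGradientAt.sub {f₁ : E → ℝ} {g g₁ x : E} (hf : HasGradientAt f g x)
    (hf₁ : HasGradientAt f₁ g₁ x) : HasGradientAt (fun z => f z - f₁ z) (g - g₁) x := by
  rw [hasGradientAt_iff_hasFDerivAt, map_sub] at *
  exact hf.sub hf₁

theorem HasGradientAt.const_mul {g x : E} (hf : HasGradientAt f g x) (c : ℝ) :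
    HasGradientAt (fun z => c * f z) (c • g) x := by
  rw [hasGradientAt_iff_hasFDerivAt] at *
  simpa using hf.const_mul c

theorem HasGradientAt.sum {ι : Type*} {s : Finset ι} {f : ι → E → ℝ} {g : ι → E} {x : E}
    (hf : ∀ i ∈ s, HasGradientAt (f i) (g i) x) :
    HasGradientAt (fun z => ∑ i ∈ s, f i z) (∑ i ∈ s, g i) x := by
  rw [hasGradientAt_iff_hasFDerivAt, map_sum]
  exact HasFDerivAt.fun_sum fun i hi => hasGradientAt_iff_hasFDerivAt.1 (hf i hi)

theorem hasGradientAt_sq_norm (x : E) :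
    HasGradientAt (fun z => ‖z‖ ^ 2) ((2 : ℝ) • x) x := by
  rw [hasGradientAt_iff_hasFDerivAt]
  refine (hasStrictFDerivAt_norm_sq x).hasFDerivAt.congr_fderiv ?_
  ext v
  simp

theorem IsLocalMin.gradient_eq_zero {x : E} (h : IsLocalMin f x) : gradient f x = 0 := by
  simp [gradient, h.fderiv_eq_zero]

theorem LipschitzWith.hasQuadraticUpperBound {K : NNReal} (hf : ∀ x, HasGradientAt f (g x) x)
    (hg : LipschitzWith K g) : HasQuadraticUpperBound f g K := by
  intro x y
  set φ : ℝ → ℝ := fun r =>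
    f (AffineMap.lineMap x y r) - r * ⟪g x, y - x⟫ - K / 2 * r ^ 2 * ‖y - x‖ ^ 2
  have hφ : ∀ r, HasDerivAt φ
      (⟪g (AffineMap.lineMap x y r) - g x, y - x⟫ - K * r * ‖y - x‖ ^ 2) r := fun r => by
    have := (((hf _).hasDerivAt_comp_lineMap (x := x) (y := y)).sub
      ((hasDerivAt_id r).mul_const ⟪g x, y - x⟫)).sub
      (((hasDerivAt_pow 2 r).const_mul (K / 2 : ℝ)).mul_const (‖y - x‖ ^ 2))
    exact this.congr_deriv (by rw [inner_sub_left, show 2 - 1 = 1 from rfl]; push_cast; ring)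
  obtain ⟨r, hr, hφr⟩ := exists_hasDerivAt_eq_slope φ _ zero_lt_one
    (fun r _ => (hφ r).continuousAt.continuousWithinAt) (fun r _ => hφ r)
  have hdist : ‖g (AffineMap.lineMap x y r) - g x‖ ≤ K * (r * ‖y - x‖) := by
    have := hg.norm_sub_le (AffineMap.lineMap x y r) x
    rwa [← vsub_eq_sub (AffineMap.lineMap x y r) x, AffineMap.lineMap_vsub_left, norm_smul,
      Real.norm_of_nonneg hr.1.le] at this
  have hinner := (real_inner_le_norm _ _).trans
    (mul_le_mul_of_nonneg_right hdist (norm_nonneg (y - x)))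
  have hφ₀ : φ 0 = f x := by simp [φ]
  have hφ₁ : φ 1 = f y - ⟪g x, y - x⟫ - K / 2 * ‖y - x‖ ^ 2 := by simp [φ]
  rw [sub_zero, div_one] at hφr
  nlinarith

theorem ConvexOn.add_inner_le {g x : E} (hc : ConvexOn ℝ Set.univ f)
    (hf : HasGradientAt f g x) (y : E) : f x + ⟪g, y - x⟫ ≤ f y := by
  have hφ : ConvexOn ℝ Set.univ (f ∘ AffineMap.lineMap (k := ℝ) x y) := by
    simpa using hc.comp_affineMap (AffineMap.lineMap x y)
  have := hφ.le_slope_of_hasDerivAt (Set.mem_univ 0) (Set.mem_univ 1) zero_lt_one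
    (HasGradientAt.hasDerivAt_comp_lineMap (by simpa using hf))
  simp only [slope_def_field, Function.comp_apply, AffineMap.lineMap_apply_one,
    AffineMap.lineMap_apply_zero, sub_zero, div_one] at this
  linarith

theorem StrongConvexOn.add_inner_add_le {μ : ℝ} (hsc : StrongConvexOn Set.univ μ f)
    (hf : ∀ x, HasGradientAt f (g x) x) (x y : E) :
    f x + ⟪g x, y - x⟫ + μ / 2 * ‖y - x‖ ^ 2 ≤ f y := by
  have := (strongConvexOn_iff_convex.1 hsc).add_inner_le
    ((hf x).sub ((hasGradientAt_sq_norm x).const_mul (μ / 2))) y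
  rw [norm_sub_sq_real]
  simp only [inner_sub_left, inner_sub_right, real_inner_smul_left, real_inner_self_eq_norm_sq,
    real_inner_comm x y, smul_smul] at *
  linarith

theorem HasQuadraticUpperBound.sq_norm_sub_le_mul_inner {K : ℝ}
    (h : HasQuadraticUpperBound f g K) (hc : ConvexOn ℝ Set.univ f)
    (hf : ∀ x, HasGradientAt f (g x) x) (hK : 0 < K) (x y : E) :
    ‖g y - g x‖ ^ 2 ≤ K * ⟪g y - g x, y - x⟫ := by
  have key : ∀ x y, ‖g y - g x‖ ^ 2 ≤ 2 * K * (f y - f x - ⟪g x, y - x⟫) := fun x y => by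
    have hmin : ∀ z, f x - ⟪g x, x⟫ ≤ f z - ⟪g x, z⟫ := fun z => by
      have := hc.add_inner_le (hf x) z
      rw [inner_sub_right] at this
      linarith
    have := (h.sub_inner (g x)).sq_norm_le hK hmin y
    rw [inner_sub_right]
    linarith
  have h₁ := key x y
  have h₂ := key y x
  rw [norm_sub_rev] at h₂
  simp only [inner_sub_left, inner_sub_right] at *
  linarith

theorem StrongConvexOn.mul_sq_norm_add_sq_norm_le {μ K : ℝ}
    (hsc : StrongConvexOn Set.univ μ f) (hf : ∀ x, HasGradientAt f (g x) x)
    (h : HasQuadraticUpperBound f g K) (hK : 0 < K) (x y : E) :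
    μ * K * ‖y - x‖ ^ 2 + ‖g y - g x‖ ^ 2 ≤ (μ + K) * ⟪g y - g x, y - x⟫ := by
  have hmono : μ * ‖y - x‖ ^ 2 ≤ ⟪g y - g x, y - x⟫ := by
    have h₁ := hsc.add_inner_add_le hf x y
    have h₂ := hsc.add_inner_add_le hf y x
    rw [norm_sub_rev, ← neg_sub y x, inner_neg_right] at h₂
    rw [inner_sub_left]
    linarith
  rcases lt_or_ge μ K with hμK | hKμ
  · -- cocoercivity of the convex, `(K - μ)`-smooth function `f - μ/2 ‖·‖²`
    have := (h.sub_half_mul_sq_norm μ).sq_norm_sub_le_mul_inner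
      (strongConvexOn_iff_convex.1 hsc) (fun z => by
        simpa [smul_smul] using (hf z).sub ((hasGradientAt_sq_norm z).const_mul (μ / 2)))
      (sub_pos.2 hμK) x y
    have hsplit : g y - μ • y - (g x - μ • x) = (g y - g x) - μ • (y - x) := by
      rw [smul_sub]; abel
    rw [hsplit] at this
    set G := g y - g x
    set d := y - x
    rw [norm_sub_sq_real, inner_sub_left G (μ • d) d, norm_smul, real_inner_smul_left,
      real_inner_smul_right, real_inner_self_eq_norm_sq, mul_pow, Real.norm_eq_abs, sq_abs]
      at this
    nlinarith
  · have hμ : 0 ≤ μ / 2 := by linarith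
    have hc : ConvexOn ℝ Set.univ f := hsc.convexOn fun r => mul_nonneg hμ (sq_nonneg r)
    have := h.sq_norm_sub_le_mul_inner hc hf hK x y
    have hd := mul_nonneg hμ (sq_nonneg ‖y - x‖)
    nlinarith [mul_le_mul_of_nonneg_left hmono hK.le]

theorem StrongConvexOn.norm_sub_smul_sub_sq_le {μ K α : ℝ} {x₀ : E}
    (hsc : StrongConvexOn Set.univ μ f) (hf : ∀ x, HasGradientAt f (g x) x)
    (h : HasQuadraticUpperBound f g K) (hK : 0 < K) (hμ : 0 ≤ μ) (hx₀ : g x₀ = 0)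
    (hα : 0 ≤ α) (hαle : α ≤ 2 / (μ + K)) (y : E) :
    ‖y - α • g y - x₀‖ ^ 2 ≤ (1 - α * (2 * μ * K / (μ + K))) * ‖y - x₀‖ ^ 2 := by
  have hμK : 0 < μ + K := by linarith
  have key := hsc.mul_sq_norm_add_sq_norm_le hf h hK x₀ y
  rw [hx₀, sub_zero] at key
  have hexp : ‖y - α • g y - x₀‖ ^ 2 =
      ‖y - x₀‖ ^ 2 - 2 * α * ⟪g y, y - x₀⟫ + α ^ 2 * ‖g y‖ ^ 2 := by
    rw [sub_right_comm, norm_sub_sq_real, real_inner_smul_right, norm_smul, mul_pow,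
      Real.norm_eq_abs, sq_abs, real_inner_comm]
    ring
  have hα2 : α ^ 2 * (μ + K) ≤ 2 * α := by
    rw [le_div_iff₀ hμK] at hαle
    nlinarith
  rw [hexp, div_eq_mul_inv]
  have hinv : (μ + K) * (μ + K)⁻¹ = 1 := mul_inv_cancel₀ hμK.ne'
  nlinarith [inv_pos.2 hμK, sq_nonneg ‖g y‖, mul_le_mul_of_nonneg_left key hα,
    mul_le_mul_of_nonneg_right hα2 (sq_nonneg ‖g y‖)]

theorem StrongConvexOn.norm_sub_smul_add_sub_sq_le {μ K α δ : ℝ} {x₀ : E}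
    (hsc : StrongConvexOn Set.univ μ f) (hf : ∀ x, HasGradientAt f (g x) x)
    (h : HasQuadraticUpperBound f g K) (hK : 0 < K) (hμ : 0 ≤ μ) (hx₀ : g x₀ = 0)
    (hα : 0 ≤ α) (hαle : α ≤ 2 / (μ + K)) (hδ : 0 < δ) (y e : E) :
    ‖y - α • (g y + e) - x₀‖ ^ 2 ≤ (1 + α * δ) * ((1 - α * (2 * μ * K / (μ + K))) *
      ‖y - x₀‖ ^ 2) + (α ^ 2 + α * δ⁻¹) * ‖e‖ ^ 2 := by
  rw [smul_add, ← sub_sub, sub_right_comm]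
  exact (norm_sub_smul_sq_le _ e hα hδ).trans <| by
    gcongr
    exact hsc.norm_sub_smul_sub_sq_le hf h hK hμ hx₀ hα hαle y

end Gradient

namespace Matrix.IsHermitian

variable {ι : Type*} [Fintype ι] [DecidableEq ι] {A : Matrix ι ι ℝ} (hA : A.IsHermitian)
include hA

theorem inner_eigenvectorBasis_toEuclideanLin_pow (t : ℕ) (v : EuclideanSpace ℝ ι) (i : ι) :
    ⟪hA.eigenvectorBasis i, toEuclideanLin (A ^ t) v⟫ =
      hA.eigenvalues i ^ t * ⟪hA.eigenvectorBasis i, v⟫ := by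
  have hT : ∀ w, ⟪hA.eigenvectorBasis i, toEuclideanLin A w⟫ =
      hA.eigenvalues i * ⟪hA.eigenvectorBasis i, w⟫ := fun w => by
    have heig : toEuclideanLin A (hA.eigenvectorBasis i) =
        hA.eigenvalues i • hA.eigenvectorBasis i := by
      ext j
      simpa [toLpLin_apply] using congrFun (hA.mulVec_eigenvectorBasis i) j
    rw [← isSymmetric_toEuclideanLin_iff.mpr hA, heig, real_inner_smul_left]
  induction t with
  | zero => simp
  | succ t ih =>
    rw [pow_succ', toLpLin_mul_same, LinearMap.comp_apply, hT, ih, pow_succ']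
    ring

theorem mul_sq_norm_le_inner_toEuclideanLin {lam : ℝ} (hlam : ∀ i, lam ≤ hA.eigenvalues i)
    (v : EuclideanSpace ℝ ι) : lam * ‖v‖ ^ 2 ≤ ⟪v, toEuclideanLin A v⟫ := by
  rw [← hA.eigenvectorBasis.sum_sq_norm_inner_right, ← hA.eigenvectorBasis.sum_inner_mul_inner,
    mul_sum]
  refine sum_le_sum fun i _ => ?_
  have := hA.inner_eigenvectorBasis_toEuclideanLin_pow 1 v i
  rw [pow_one, pow_one] at this
  rw [this, real_inner_comm, Real.norm_eq_abs, sq_abs]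
  nlinarith [sq_nonneg ⟪hA.eigenvectorBasis i, v⟫, hlam i]

theorem norm_toEuclideanLin_pow_le {c : ℝ} (hc : 0 ≤ c) {v : EuclideanSpace ℝ ι}
    (hv : ∀ i, ⟪hA.eigenvectorBasis i, v⟫ ≠ 0 → |hA.eigenvalues i| ≤ c) (t : ℕ) :
    ‖toEuclideanLin (A ^ t) v‖ ≤ c ^ t * ‖v‖ := by
  rw [← sq_le_sq₀ (norm_nonneg _) (by positivity), mul_pow,
    ← hA.eigenvectorBasis.sum_sq_norm_inner_right, ← hA.eigenvectorBasis.sum_sq_norm_inner_right,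
    mul_sum]
  refine sum_le_sum fun i _ => ?_
  rw [hA.inner_eigenvectorBasis_toEuclideanLin_pow, norm_mul, mul_pow, norm_pow, ← pow_mul,
    ← pow_mul]
  by_cases h : ⟪hA.eigenvectorBasis i, v⟫ = 0
  · simp [h]
  · gcongr
    exact hv i h

theorem inner_eigenvectorBasis_eq_zero_of_ne_one {u : EuclideanSpace ℝ ι}
    (hu : toEuclideanLin A u = u) {i : ι} (hi : hA.eigenvalues i ≠ 1) :
    ⟪hA.eigenvectorBasis i, u⟫ = 0 := by
  have := hA.inner_eigenvectorBasis_toEuclideanLin_pow 1 u i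
  rw [pow_one, pow_one, hu] at this
  have : (1 - hA.eigenvalues i) * ⟪hA.eigenvectorBasis i, u⟫ = 0 := by linarith
  exact (mul_eq_zero.1 this).resolve_left (sub_ne_zero.2 hi.symm)

theorem norm_toEuclideanLin_pow_le_of_inner_eq_zero {u v : EuclideanSpace ℝ ι}
    (hu : toEuclideanLin A u = u) (hu₀ : u ≠ 0) {i₀ : ι}
    (hsimple : ∀ i, hA.eigenvalues i = 1 → i = i₀) {β : ℝ} (hβ : 0 ≤ β)
    (hβA : ∀ i, hA.eigenvalues i ≠ 1 → |hA.eigenvalues i| ≤ β) (huv : ⟪u, v⟫ = 0) (t : ℕ) :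
    ‖toEuclideanLin (A ^ t) v‖ ≤ β ^ t * ‖v‖ := by
  set b := hA.eigenvectorBasis
  -- `u` is a nonzero multiple of `b i₀`, so `v ⊥ u` has no component along `b i₀`
  have hui : ∀ i ≠ i₀, ⟪b i, u⟫ = 0 := fun i hi =>
    hA.inner_eigenvectorBasis_eq_zero_of_ne_one hu fun h => hi (hsimple i h)
  have hui₀ : ⟪b i₀, u⟫ ≠ 0 := fun h => hu₀ <| by
    rw [← b.sum_repr' u]
    exact sum_eq_zero fun i _ => by
      rcases eq_or_ne i i₀ with rfl | hi
      · rw [h, zero_smul]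
      · rw [hui i hi, zero_smul]
  have hvi₀ : ⟪b i₀, v⟫ = 0 := by
    rw [← b.sum_inner_mul_inner, sum_eq_single i₀ (fun i _ hi => by
      rw [real_inner_comm, hui i hi, zero_mul]) (by simp), real_inner_comm] at huv
    exact (mul_eq_zero.1 huv).resolve_left hui₀
  refine hA.norm_toEuclideanLin_pow_le hβ (fun i hi => hβA i fun h => hi ?_) t
  rwa [hsimple i h]

end Matrix.IsHermitian

section Kron

variable {n p : ℕ}

def coordSlice (x : CVec n p) (c : Fin p) : EuclideanSpace ℝ (Fin n) :=
  WithLp.toLp 2 fun i => x i c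

theorem inner_eq_sum_inner_coordSlice (x y : CVec n p) :
    ⟪x, y⟫ = ∑ c, ⟪coordSlice x c, coordSlice y c⟫ := by
  simp only [PiLp.inner_apply, coordSlice, RCLike.inner_apply, Real.ringHom_apply]
  exact sum_comm

theorem sq_norm_eq_sum_sq_norm_coordSlice (x : CVec n p) :
    ‖x‖ ^ 2 = ∑ c, ‖coordSlice x c‖ ^ 2 := by
  simp only [← real_inner_self_eq_norm_sq, inner_eq_sum_inner_coordSlice]

theorem coordSlice_kron (A : Matrix (Fin n) (Fin n) ℝ) (x : CVec n p) (c : Fin p) :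
    coordSlice (kron A x) c = Matrix.toEuclideanLin A (coordSlice x c) := by
  ext i
  simp [coordSlice, kron, Matrix.toLpLin_apply, Matrix.mulVec, dotProduct]

def kronLinearMap (A : Matrix (Fin n) (Fin n) ℝ) : CVec n p →ₗ[ℝ] CVec n p where
  toFun := kron A
  map_add' x y := by ext i : 1; simp [kron, sum_add_distrib]
  map_smul' r x := by ext i : 1; simp [kron, smul_sum, smul_comm r]

theorem kronLinearMap_isSymmetric {A : Matrix (Fin n) (Fin n) ℝ} (hA : A.IsHermitian) :
    (kronLinearMap A : CVec n p →ₗ[ℝ] CVec n p).IsSymmetric := fun x y => by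
  simp only [kronLinearMap, LinearMap.coe_mk, AddHom.coe_mk, inner_eq_sum_inner_coordSlice,
    coordSlice_kron, Matrix.isSymmetric_toEuclideanLin_iff.mpr hA _]

theorem norm_kron_le {A : Matrix (Fin n) (Fin n) ℝ} {x : CVec n p} {b : ℝ} (hb : 0 ≤ b)
    (h : ∀ c, ‖Matrix.toEuclideanLin A (coordSlice x c)‖ ≤ b * ‖coordSlice x c‖) :
    ‖kron A x‖ ≤ b * ‖x‖ := by
  rw [← sq_le_sq₀ (norm_nonneg _) (by positivity), mul_pow, sq_norm_eq_sum_sq_norm_coordSlice,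
    sq_norm_eq_sum_sq_norm_coordSlice, mul_sum]
  refine sum_le_sum fun c _ => ?_
  rw [coordSlice_kron, ← mul_pow]
  exact pow_le_pow_left₀ (norm_nonneg _) (h c) 2

theorem mul_sq_norm_le_inner_kron {A : Matrix (Fin n) (Fin n) ℝ} {lam : ℝ}
    (h : ∀ v, lam * ‖v‖ ^ 2 ≤ ⟪v, Matrix.toEuclideanLin A v⟫) (x : CVec n p) :
    lam * ‖x‖ ^ 2 ≤ ⟪x, kron A x⟫ := by
  rw [sq_norm_eq_sum_sq_norm_coordSlice, inner_eq_sum_inner_coordSlice, mul_sum]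
  exact sum_le_sum fun c _ => by rw [coordSlice_kron]; exact h _

-- `blockConst n v` is `1ₙ ⊗ v` and `blockAvg x` is the mean `x̄` of the blocks.
def blockConst (n : ℕ) (v : Vec p) : CVec n p := WithLp.toLp 2 fun _ => v

def blockAvg (x : CVec n p) : Vec p := (n : ℝ)⁻¹ • ∑ i, x i

def consensusError (x : CVec n p) : CVec n p := x - blockConst n (blockAvg x)

theorem sum_row_pow_eq_one {ι : Type*} [Fintype ι] [DecidableEq ι] {A : Matrix ι ι ℝ}
    (hA : ∀ i, ∑ j, A i j = 1) (t : ℕ) (i : ι) : ∑ j, (A ^ t) i j = 1 := by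
  induction t generalizing i with
  | zero => simp [Matrix.one_apply]
  | succ t ih =>
    simp only [pow_succ', Matrix.mul_apply]
    rw [sum_comm]
    simp [← mul_sum, ih, hA]

theorem sum_col_pow_eq_one {ι : Type*} [Fintype ι] [DecidableEq ι] {A : Matrix ι ι ℝ}
    (hA : ∀ j, ∑ i, A i j = 1) (t : ℕ) (j : ι) : ∑ i, (A ^ t) i j = 1 := by
  simpa [← Matrix.transpose_pow] using sum_row_pow_eq_one (A := A.transpose) hA t j

theorem kron_blockConst {A : Matrix (Fin n) (Fin n) ℝ} (hA : ∀ i, ∑ j, A i j = 1)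
    (v : Vec p) : kron A (blockConst n v) = blockConst n v := by
  ext i : 1
  simp [kron, blockConst, ← sum_smul, hA]

theorem blockAvg_kron {A : Matrix (Fin n) (Fin n) ℝ} (hA : ∀ j, ∑ i, A i j = 1)
    (x : CVec n p) : blockAvg (kron A x) = blockAvg x := by
  simp only [blockAvg, kron, PiLp.toLp_apply]
  rw [sum_comm]
  simp [← sum_smul, hA]

theorem blockAvg_sub (x y : CVec n p) : blockAvg (x - y) = blockAvg x - blockAvg y := by
  simp only [blockAvg, PiLp.sub_apply, sum_sub_distrib, smul_sub]

theorem blockAvg_smul (α : ℝ) (x : CVec n p) : blockAvg (α • x) = α • blockAvg x := by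
  simp only [blockAvg, PiLp.smul_apply, ← smul_sum, smul_comm α]

theorem consensusError_kron_sub_smul {A : Matrix (Fin n) (Fin n) ℝ}
    (hrow : ∀ i, ∑ j, A i j = 1) (hcol : ∀ j, ∑ i, A i j = 1) (x y : CVec n p) (α : ℝ) :
    consensusError (kron A x - α • y) = kron A (consensusError x) - α • consensusError y := by
  have hlin : kron A (consensusError x) = kron A x - blockConst n (blockAvg x) := by
    conv_rhs => rw [← kron_blockConst hrow (blockAvg x)]
    exact map_sub (kronLinearMap A) _ _
  rw [hlin]
  simp only [consensusError, blockAvg_sub, blockAvg_smul, blockAvg_kron hcol]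
  ext i : 1
  simp only [blockConst, PiLp.sub_apply, PiLp.smul_apply]
  module

theorem consensusError_zero : consensusError (0 : CVec n p) = 0 := by
  simp [consensusError, blockConst, blockAvg]
  rfl

theorem sum_consensusError [NeZero n] (x : CVec n p) : ∑ i, consensusError x i = 0 := by
  simp only [consensusError, blockConst, blockAvg, PiLp.sub_apply, sum_sub_distrib, sum_const,
    card_univ, Fintype.card_fin]
  rw [← Nat.cast_smul_eq_nsmul ℝ, smul_smul, mul_inv_cancel₀ (Nat.cast_ne_zero.2 (NeZero.ne n)),
    one_smul, sub_self]

theorem norm_consensusError_le (x : CVec n p) : ‖consensusError x‖ ≤ ‖x‖ := by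
  set S := ∑ i, x i
  have hinner : ⟪x, blockConst n (blockAvg x)⟫ = (n : ℝ)⁻¹ * ‖S‖ ^ 2 := by
    rw [PiLp.inner_apply]
    simp only [blockConst, blockAvg, PiLp.toLp_apply]
    rw [← sum_inner, real_inner_smul_right, real_inner_self_eq_norm_sq]
  have hn : (n : ℝ) * (n : ℝ)⁻¹ ^ 2 = (n : ℝ)⁻¹ := by
    rcases eq_or_ne (n : ℝ) 0 with h | h
    · simp [h]
    · field_simp
  have hconst : ‖blockConst n (blockAvg x)‖ ^ 2 = (n : ℝ)⁻¹ * ‖S‖ ^ 2 := by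
    rw [PiLp.norm_sq_eq_of_L2]
    simp only [blockConst, PiLp.toLp_apply, sum_const, card_univ, Fintype.card_fin, nsmul_eq_mul]
    rw [blockAvg, norm_smul, mul_pow, norm_inv, Real.norm_natCast, ← mul_assoc, hn]
  rw [← sq_le_sq₀ (norm_nonneg _) (norm_nonneg _), consensusError, norm_sub_sq_real, hinner,
    hconst]
  nlinarith [inv_nonneg.2 (Nat.cast_nonneg n : (0 : ℝ) ≤ n), sq_nonneg ‖S‖]

theorem norm_blockAvg_le (x : CVec n p) : ‖blockAvg x‖ ≤ ‖x‖ := by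
  rcases Nat.eq_zero_or_pos n with rfl | hn
  · simp [blockAvg]
  calc ‖blockAvg x‖ ≤ (n : ℝ)⁻¹ * ∑ i, ‖x i‖ := by
        rw [blockAvg, norm_smul, norm_inv, Real.norm_natCast]
        exact mul_le_mul_of_nonneg_left (norm_sum_le _ _) (by positivity)
    _ ≤ (n : ℝ)⁻¹ * ∑ _i : Fin n, ‖x‖ :=
        mul_le_mul_of_nonneg_left (sum_le_sum fun i _ => PiLp.norm_apply_le x i) (by positivity)
    _ = ‖x‖ := by simp [field]

variable {W : Matrix (Fin n) (Fin n) ℝ}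

theorem norm_kron_pow_le_of_sum_eq_zero (hW : W.IsHermitian) (hrow : ∀ i, ∑ j, W i j = 1)
    {i₀ : Fin n} (hsimple : ∀ i, hW.eigenvalues i = 1 → i = i₀) {β : ℝ} (hβ : 0 ≤ β)
    (hβW : ∀ i, hW.eigenvalues i ≠ 1 → |hW.eigenvalues i| ≤ β) {y : CVec n p}
    (hy : ∑ i, y i = 0) (t : ℕ) : ‖kron (W ^ t) y‖ ≤ β ^ t * ‖y‖ := by
  set u : EuclideanSpace ℝ (Fin n) := WithLp.toLp 2 fun _ => 1
  have hu : Matrix.toEuclideanLin W u = u := by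
    ext i
    simp [Matrix.toLpLin_apply, Matrix.mulVec, dotProduct, hrow, u]
  have hu₀ : u ≠ 0 := fun h => by simpa [u] using congrArg (fun v => v i₀) h
  refine norm_kron_le (by positivity) fun c =>
    hW.norm_toEuclideanLin_pow_le_of_inner_eq_zero hu hu₀ hsimple hβ hβW ?_ t
  simpa [u, coordSlice, PiLp.inner_apply] using congrArg (fun v : Vec p => v c) hy

theorem norm_kron_pow_le (hW : W.IsHermitian) (habs : ∀ i, |hW.eigenvalues i| ≤ 1) (t : ℕ)
    (x : CVec n p) : ‖kron (W ^ t) x‖ ≤ ‖x‖ := by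
  simpa using norm_kron_le zero_le_one fun c => by
    simpa using hW.norm_toEuclideanLin_pow_le zero_le_one (fun i _ => habs i) t

end Kron

section DGD

variable {n p : ℕ}

def sumObjective (f : Fin n → Vec p → ℝ) (x : CVec n p) : ℝ := ∑ i, f i (x i)

theorem hasGradientAt_sumObjective {f : Fin n → Vec p → ℝ} (hf : ∀ i, Differentiable ℝ (f i))
    (x : CVec n p) : HasGradientAt (sumObjective f) (gradConcat f x) x := by
  rw [hasGradientAt_iff_hasFDerivAt]
  refine (HasFDerivAt.fun_sum (u := univ) fun i _ =>
    ((hf i (x i)).hasGradientAt.hasFDerivAt).comp x (PiLp.hasFDerivAt_apply 2 x i)).congr_fderiv ?_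
  ext v
  simp only [_root_.sum_apply, ContinuousLinearMap.comp_apply,
    InnerProductSpace.toDual_apply_apply, PiLp.proj_apply, PiLp.inner_apply, gradConcat]

theorem lipschitzWith_gradConcat {f : Fin n → Vec p → ℝ} {K : NNReal}
    (hf : ∀ i, LipschitzWith K (gradient (f i))) : LipschitzWith K (gradConcat f) := by
  refine LipschitzWith.of_dist_le_mul fun x y => ?_
  rw [dist_eq_norm, dist_eq_norm, ← sq_le_sq₀ (norm_nonneg _) (by positivity), mul_pow,
    PiLp.norm_sq_eq_of_L2, PiLp.norm_sq_eq_of_L2, mul_sum]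
  refine sum_le_sum fun i _ => ?_
  rw [← mul_pow]
  exact pow_le_pow_left₀ (norm_nonneg _) ((hf i).norm_sub_le (x i) (y i)) 2

theorem hasGradientAt_average {f : Fin n → Vec p → ℝ} (hf : ∀ i, Differentiable ℝ (f i))
    (z : Vec p) : HasGradientAt (fun z => (n : ℝ)⁻¹ * ∑ i, f i z)
      (blockAvg (gradConcat f (blockConst n z))) z :=
  (HasGradientAt.sum fun i _ => (hf i z).hasGradientAt).const_mul _

theorem exists_blockAvg_kron_sub_smul_eq {A : Matrix (Fin n) (Fin n) ℝ}
    (hcol : ∀ j, ∑ i, A i j = 1) {f : Fin n → Vec p → ℝ} {K : NNReal}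
    (hf : LipschitzWith K (gradConcat f)) (α : ℝ) (x : CVec n p) :
    ∃ e, blockAvg (kron A x - α • gradConcat f x) =
        blockAvg x - α • (blockAvg (gradConcat f (blockConst n (blockAvg x))) + e) ∧
      ‖e‖ ≤ K * ‖consensusError x‖ := by
  refine ⟨blockAvg (gradConcat f x - gradConcat f (blockConst n (blockAvg x))), ?_, ?_⟩
  · rw [blockAvg_sub, blockAvg_sub, blockAvg_smul, blockAvg_kron hcol, add_sub_cancel]
  · exact (norm_blockAvg_le _).trans (hf.norm_sub_le _ _)

theorem norm_consensusError_iterate_le [NeZero n] {A : Matrix (Fin n) (Fin n) ℝ}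
    (hrow : ∀ i, ∑ j, A i j = 1) (hcol : ∀ j, ∑ i, A i j = 1) {q : ℝ} (hq₀ : 0 ≤ q)
    (hq₁ : q < 1) (hA : ∀ y : CVec n p, ∑ i, y i = 0 → ‖kron A y‖ ≤ q * ‖y‖) {α D : ℝ}
    (hα : 0 ≤ α) {x G : ℕ → CVec n p} (hG : ∀ k, ‖G k‖ ≤ D)
    (hx₀ : consensusError (x 0) = 0) (hx : ∀ k, x (k + 1) = kron A (x k) - α • G k) (k : ℕ) :
    ‖consensusError (x k)‖ ≤ α * D / (1 - q) := by
  have hD : 0 ≤ D := (norm_nonneg _).trans (hG 0)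
  have hq : 0 < 1 - q := sub_pos.2 hq₁
  induction k with
  | zero => rw [hx₀, norm_zero]; positivity
  | succ k ih =>
    rw [hx, consensusError_kron_sub_smul hrow hcol]
    calc ‖kron A (consensusError (x k)) - α • consensusError (G k)‖
        ≤ q * ‖consensusError (x k)‖ + α * ‖G k‖ := by
          refine (norm_sub_le _ _).trans (add_le_add (hA _ (sum_consensusError _)) ?_)
          rw [norm_smul, Real.norm_of_nonneg hα]
          exact mul_le_mul_of_nonneg_left (norm_consensusError_le _) hα
      _ ≤ q * (α * D / (1 - q)) + α * D := by gcongr; exact hG k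
      _ = α * D / (1 - q) := by field_simp; ring

theorem norm_gradConcat_iterate_le {f : Fin n → Vec p → ℝ} (hf : ∀ i, Differentiable ℝ (f i))
    {L : ℝ} (hL : 0 < L) (hLip : LipschitzWith L.toNNReal (gradConcat f)) {xs : Fin n → Vec p}
    (hxs : ∀ i z, f i (xs i) ≤ f i z) {A : Matrix (Fin n) (Fin n) ℝ} (hA : A.IsHermitian)
    {lam : ℝ} (hlam : ∀ i, lam ≤ hA.eigenvalues i) (hA₁ : ∀ v : CVec n p, ‖kron A v‖ ≤ ‖v‖)
    {α : ℝ} (hα : 0 < α) (hαL : α * L ≤ 1 + lam) {x : ℕ → CVec n p} (hx₀ : x 0 = 0)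
    (hx : ∀ k, x (k + 1) = kron A (x k) - α • gradConcat f (x k)) (k : ℕ) :
    ‖gradConcat f (x k)‖ ≤ √(2 * L * ∑ i, (f i 0 - f i (xs i))) := by
  have hF : HasQuadraticUpperBound (sumObjective f) (gradConcat f) L := by
    simpa [hL.le] using hLip.hasQuadraticUpperBound (hasGradientAt_sumObjective hf)
  have hA₁' : ∀ v : CVec n p, ⟪v, kron A v⟫ ≤ ‖v‖ ^ 2 := fun v =>
    (real_inner_le_norm _ _).trans (by rw [sq]; gcongr; exact hA₁ v)
  have := hF.sq_norm_iterate_le hL (kronLinearMap_isSymmetric hA)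
    (mul_sq_norm_le_inner_kron (hA.mul_sq_norm_le_inner_toEuclideanLin hlam)) hA₁' hα hαL hx
    (x₀ := WithLp.toLp 2 xs) (fun z => sum_le_sum fun i _ => hxs i (z i)) k
  exact Real.le_sqrt_of_sq_le <| by
    simpa [penalizedObjective, hx₀, sumObjective, sum_sub_distrib] using this

theorem sq_norm_blockAvg_kron_sub_smul_sub_le {A : Matrix (Fin n) (Fin n) ℝ}
    (hcol : ∀ j, ∑ i, A i j = 1) {f : Fin n → Vec p → ℝ} (hf : ∀ i, Differentiable ℝ (f i))
    {K : NNReal} (hK : LipschitzWith K (gradConcat f)) {μ Lf : ℝ}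
    (hsc : StrongConvexOn Set.univ μ fun z => (n : ℝ)⁻¹ * ∑ i, f i z) (hμ : 0 ≤ μ) (hLf : 0 < Lf)
    (hLip : LipschitzWith Lf.toNNReal (gradient fun z => (n : ℝ)⁻¹ * ∑ i, f i z)) {x₀ : Vec p}
    (hx₀ : ∀ z, (n : ℝ)⁻¹ * ∑ i, f i x₀ ≤ (n : ℝ)⁻¹ * ∑ i, f i z) {α δ : ℝ} (hα : 0 ≤ α)
    (hαle : α ≤ 2 / (μ + Lf)) (hδ : 0 < δ) (x : CVec n p) :
    ‖blockAvg (kron A x - α • gradConcat f x) - x₀‖ ^ 2 ≤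
      (1 + α * δ) * ((1 - α * (2 * μ * Lf / (μ + Lf))) * ‖blockAvg x - x₀‖ ^ 2) +
        (α ^ 2 + α * δ⁻¹) * (K * ‖consensusError x‖) ^ 2 := by
  have hgrad := hasGradientAt_average hf
  have hfbar : ∀ z, HasGradientAt (fun z => (n : ℝ)⁻¹ * ∑ i, f i z)
      (gradient (fun z => (n : ℝ)⁻¹ * ∑ i, f i z) z) z :=
    fun z => (hgrad z).differentiableAt.hasGradientAt
  have hQ := hLip.hasQuadraticUpperBound hfbar
  rw [Real.coe_toNNReal _ hLf.le] at hQ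
  obtain ⟨e, hstep, he⟩ := exists_blockAvg_kron_sub_smul_eq hcol hK α x
  rw [hstep, ← (hgrad _).gradient]
  refine (hsc.norm_sub_smul_add_sub_sq_le hfbar hQ hLf hμ
    (IsLocalMin.gradient_eq_zero (Filter.Eventually.of_forall hx₀)) hα hαle hδ _ e).trans ?_
  gcongr

end DGD

theorem dgdt_bounded_distance_to_minimum_general
    (n p t : ℕ) (hn : 1 ≤ n) (ht : 1 ≤ t)
    -- local objective functions: convex, differentiable, with Lᵢ-Lipschitz gradients
    (f : Fin n → Vec p → ℝ) (Lc : Fin n → ℝ) (L : ℝ)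
    (hdiff : ∀ i, Differentiable ℝ (f i))
    (hLpos : ∀ i, 0 < Lc i)
    (hLip : ∀ i, LipschitzWith (Real.toNNReal (Lc i)) (fun z => gradient (f i) z))
    (hLmax : IsGreatest (Set.range Lc) L)
    -- each fᵢ attains its minimum at xsᵢ
    (xs : Fin n → Vec p) (hxs : ∀ i, ∀ z, f i (xs i) ≤ f i z)
    -- the average function f̄ = (1/n) ∑ᵢ fᵢ: μ_f̄-strongly convex with
    -- L_f̄-Lipschitz gradient and unique minimizer x*
    (fbar : Vec p → ℝ) (hfbar : ∀ z, fbar z = (n : ℝ)⁻¹ * ∑ i, f i z)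
    (μf Lf : ℝ) (hμf : 0 < μf) (hLf : 0 < Lf)
    (hfbarsc : StrongConvexOn Set.univ μf fbar)
    (hfbarLip : LipschitzWith (Real.toNNReal Lf) (fun z => gradient fbar z))
    (xstar : Vec p) (hxstar : ∀ z, fbar xstar ≤ fbar z)
    -- W is symmetric, doubly stochastic, with eigenvalues in (−1, 1],
    -- exactly one eigenvalue equal to 1
    (W : Matrix (Fin n) (Fin n) ℝ) (hWsymm : W.IsHermitian)
    (hrow : ∀ i, ∑ j, W i j = 1) (hcol : ∀ j, ∑ i, W i j = 1)
    (heig : ∀ i, hWsymm.eigenvalues i ∈ Set.Ioc (-1 : ℝ) 1)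
    (hone : ∃! i, hWsymm.eigenvalues i = 1)
    -- β ∈ (0,1): the second largest magnitude of the eigenvalues of W
    (β : ℝ) (hβmem : β ∈ Set.Ioo (0 : ℝ) 1)
    (hβ : IsGreatest {r : ℝ | ∃ i, hWsymm.eigenvalues i ≠ 1 ∧ r = |hWsymm.eigenvalues i|} β)
    -- λₙ(Wᵗ): the smallest eigenvalue of Wᵗ
    (hWt : (W ^ t).IsHermitian)
    (lam : ℝ) (hlam : IsLeast (Set.range hWt.eigenvalues) lam)
    -- constants c₂, c₄, D
    (c2 c4 D : ℝ)
    (hc2 : c2 = 2 * μf * Lf / (μf + Lf))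
    (hc4 : c4 = 2 / (μf + Lf))
    (hD : D = Real.sqrt (2 * L * ∑ i, (f i 0 - f i (xs i))))
    -- stepsize condition α ≤ min{(1 + λₙ(Wᵗ))/L, c₄}
    (α : ℝ) (hα : 0 < α) (hαle : α ≤ min ((1 + lam) / L) c4)
    -- DGDᵗ iterates starting from x₀ = 0, and their mean
    (x : ℕ → CVec n p) (hx0 : x 0 = 0)
    (hiter : ∀ k, x (k + 1) = kron (W ^ t) (x k) - α • gradConcat f (x k))
    (xbar : ℕ → Vec p) (hxbar : ∀ k, xbar k = (n : ℝ)⁻¹ • ∑ i, x k i)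
    -- free parameter δ > 0
    (δ : ℝ) (hδ : 0 < δ) :
    ∀ k, ‖xbar (k + 1) - xstar‖ ^ 2 ≤
      (1 - α * c2 + α * δ - α ^ 2 * δ * c2) * ‖xbar k - xstar‖ ^ 2 +
        (α ^ 3 * (α + δ⁻¹) * L ^ 2 * D ^ 2) / (1 - β ^ t) ^ 2 := by
  intro k
  obtain rfl : fbar = fun z => (n : ℝ)⁻¹ * ∑ i, f i z := funext hfbar
  obtain ⟨i₀, -, hi₀⟩ := hone
  have : NeZero n := ⟨by omega⟩
  have hL : 0 < L := by obtain ⟨i, rfl⟩ := hLmax.1; exact hLpos i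
  have hβt : β ^ t < 1 := pow_lt_one₀ hβmem.1.le hβmem.2 (by omega)
  have hLipG : LipschitzWith L.toNNReal (gradConcat f) := lipschitzWith_gradConcat fun i =>
    (hLip i).weaken (Real.toNNReal_le_toNNReal (hLmax.2 ⟨i, rfl⟩))
  have hG : ∀ k, ‖gradConcat f (x k)‖ ≤ D := fun k => hD ▸
    norm_gradConcat_iterate_le hdiff hL hLipG hxs hWt (fun i => hlam.2 ⟨i, rfl⟩)
      (norm_kron_pow_le hWsymm (fun i => abs_le.2 ⟨(heig i).1.le, (heig i).2⟩) t) hα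
      ((le_div_iff₀ hL).1 (le_min_iff.1 hαle).1) hx0 hiter k
  have hcons : ∀ k, ‖consensusError (x k)‖ ≤ α * D / (1 - β ^ t) :=
    norm_consensusError_iterate_le (sum_row_pow_eq_one hrow t) (sum_col_pow_eq_one hcol t)
      (pow_nonneg hβmem.1.le t) hβt (fun y hy => norm_kron_pow_le_of_sum_eq_zero hWsymm hrow hi₀
        hβmem.1.le (fun i hi => hβ.2 ⟨i, hi, rfl⟩) hy t) hα.le hG
      (hx0 ▸ consensusError_zero) hiter
  calc ‖xbar (k + 1) - xstar‖ ^ 2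
      ≤ (1 + α * δ) * ((1 - α * c2) * ‖xbar k - xstar‖ ^ 2) +
        (α ^ 2 + α * δ⁻¹) * (L * (α * D / (1 - β ^ t))) ^ 2 := by
        simp only [show ∀ k, xbar k = blockAvg (x k) from hxbar]
        rw [hiter, hc2, ← Real.coe_toNNReal L hL.le]
        refine (sq_norm_blockAvg_kron_sub_smul_sub_le (sum_col_pow_eq_one hcol t) hdiff hLipG
          hfbarsc hμf.le hLf hfbarLip hxstar hα.le (hc4 ▸ (le_min_iff.1 hαle).2) hδ (x k)).trans ?_
        gcongr
        exact hcons k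
    _ = (1 - α * c2 + α * δ - α ^ 2 * δ * c2) * ‖xbar k - xstar‖ ^ 2 +
        (α ^ 3 * (α + δ⁻¹) * L ^ 2 * D ^ 2) / (1 - β ^ t) ^ 2 := by
        field_simp
        ring

/-- Bounded distance to optimal solution for DGDᵗ: if
`α ≤ min{(1 + λₙ(Wᵗ))/L, c₄}` and `x₀ = 0`, then for every `δ > 0` and every `k ≥ 0`,
`‖x̄_{k+1} − x*‖² ≤ c₁²‖x̄_k − x*‖² + c₃²/(1 − βᵗ)²`. -/
theorem dgdt_bounded_distance_to_minimum
    (n p t : ℕ) (hn : 1 ≤ n) (hp : 1 ≤ p) (ht : 1 ≤ t)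
    -- local objective functions: convex, differentiable, with Lᵢ-Lipschitz gradients
    (f : Fin n → Vec p → ℝ) (Lc : Fin n → ℝ) (L : ℝ)
    (hconv : ∀ i, ConvexOn ℝ Set.univ (f i))
    (hdiff : ∀ i, Differentiable ℝ (f i))
    (hLpos : ∀ i, 0 < Lc i)
    (hLip : ∀ i, LipschitzWith (Real.toNNReal (Lc i)) (fun z => gradient (f i) z))
    (hLmax : IsGreatest (Set.range Lc) L)
    -- each fᵢ attains its minimum at xsᵢ
    (xs : Fin n → Vec p) (hxs : ∀ i, ∀ z, f i (xs i) ≤ f i z)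
    -- the average function f̄ = (1/n) ∑ᵢ fᵢ: μ_f̄-strongly convex with
    -- L_f̄-Lipschitz gradient and unique minimizer x*
    (fbar : Vec p → ℝ) (hfbar : ∀ z, fbar z = (n : ℝ)⁻¹ * ∑ i, f i z)
    (μf Lf : ℝ) (hμf : 0 < μf) (hLf : 0 < Lf)
    (hfbarsc : StrongConvexOn Set.univ μf fbar)
    (hfbarLip : LipschitzWith (Real.toNNReal Lf) (fun z => gradient fbar z))
    (xstar : Vec p) (hxstar : ∀ z, fbar xstar ≤ fbar z)
    (hxstaru : ∀ z, fbar z = fbar xstar → z = xstar)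
    -- W is symmetric, doubly stochastic, with eigenvalues in (−1, 1],
    -- exactly one eigenvalue equal to 1
    (W : Matrix (Fin n) (Fin n) ℝ) (hWsymm : W.IsHermitian)
    (hrow : ∀ i, ∑ j, W i j = 1) (hcol : ∀ j, ∑ i, W i j = 1)
    (hWnn : ∀ i j, 0 ≤ W i j)
    (heig : ∀ i, hWsymm.eigenvalues i ∈ Set.Ioc (-1 : ℝ) 1)
    (hone : ∃! i, hWsymm.eigenvalues i = 1)
    -- β ∈ (0,1): the second largest magnitude of the eigenvalues of W
    (β : ℝ) (hβmem : β ∈ Set.Ioo (0 : ℝ) 1)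
    (hβ : IsGreatest {r : ℝ | ∃ i, hWsymm.eigenvalues i ≠ 1 ∧ r = |hWsymm.eigenvalues i|} β)
    -- λₙ(Wᵗ): the smallest eigenvalue of Wᵗ
    (hWt : (W ^ t).IsHermitian)
    (lam : ℝ) (hlam : IsLeast (Set.range hWt.eigenvalues) lam)
    -- constants c₂, c₄, D
    (c2 c4 D : ℝ)
    (hc2 : c2 = 2 * μf * Lf / (μf + Lf))
    (hc4 : c4 = 2 / (μf + Lf))
    (hD : D = Real.sqrt (2 * L * ∑ i, (f i 0 - f i (xs i))))
    -- stepsize condition α ≤ min{(1 + λₙ(Wᵗ))/L, c₄}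
    (α : ℝ) (hα : 0 < α) (hαle : α ≤ min ((1 + lam) / L) c4)
    -- DGDᵗ iterates starting from x₀ = 0, and their mean
    (x : ℕ → CVec n p) (hx0 : x 0 = 0)
    (hiter : ∀ k, x (k + 1) = kron (W ^ t) (x k) - α • gradConcat f (x k))
    (xbar : ℕ → Vec p) (hxbar : ∀ k, xbar k = (n : ℝ)⁻¹ • ∑ i, x k i)
    -- free parameter δ > 0
    (δ : ℝ) (hδ : 0 < δ) :
    ∀ k, ‖xbar (k + 1) - xstar‖ ^ 2 ≤
      (1 - α * c2 + α * δ - α ^ 2 * δ * c2) * ‖xbar k - xstar‖ ^ 2 +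
        (α ^ 3 * (α + δ⁻¹) * L ^ 2 * D ^ 2) / (1 - β ^ t) ^ 2 :=
  dgdt_bounded_distance_to_minimum_general n p t hn ht f Lc L hdiff hLpos hLip hLmax xs hxs fbar
    hfbar μf Lf hμf hLf hfbarsc hfbarLip xstar hxstar W hWsymm hrow hcol heig hone β hβmem hβ hWt
    lam hlam c2 c4 D hc2 hc4 hD α hα hαle x hx0 hiter xbar hxbar δ hδ
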